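/- arXiv:1412.8400 — 2 statements merged into one kernel-verified Lean document; each statement's English description precedes it below -/
import Mathlib

section
/- Let T be a spanning tree of Kₙ and let p, p' be two leaves of T. Then the distance between p and p' in T is greater than 2 if and only if there exists a spanning tree T' with |E(T) △ E(T')| = 2 in which both p and p' have degree exactly 2. -/
/-!
If the leaves `p`, `p'` are at distance at least 3, the path between them starts `p, a, b` with
`b ≠ p'`. The edge `ab` separates `p` from `p'`, so exchanging it for `pp'` yields a tree in which
each of `p`, `p'` has gained exactly one neighbour.

Conversely, two trees have equally many edges, so `T'` arises from `T` by exchanging one edge for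
one new edge `f`. A leaf reaches degree 2 in `T'` only by lying on `f` while keeping its old edge;
hence `f = pp'`, so `p`, `p'` are not adjacent in `T`, and a common neighbour in `T` would close a
triangle `p, x, p'` in `T'`.
-/

open SimpleGraph

theorem Set.ncard_symmDiff_eq_two_mul_ncard_sdiff {α : Type*} {A B : Set α} (hA : A.Finite)
    (hB : B.Finite) (h : A.ncard = B.ncard) : (symmDiff A B).ncard = 2 * (B \ A).ncard := by
  have hAB := Set.ncard_inter_add_ncard_sdiff_eq_ncard A B hA
  have hBA := Set.ncard_inter_add_ncard_sdiff_eq_ncard B A hB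
  rw [Set.inter_comm] at hBA
  rw [Set.symmDiff_def, Set.ncard_union_eq disjoint_sdiff_sdiff hA.sdiff hB.sdiff]
  omega

namespace SimpleGraph

variable {V : Type*} {G : SimpleGraph V}

theorem Connected.two_lt_dist_iff (hG : G.Connected) {u v : V} :
    2 < G.dist u v ↔ u ≠ v ∧ ¬G.Adj u v ∧ G.commonNeighbors u v = ∅ := by
  rw [← two_lt_edist_iff, ← (hG u v).coe_dist_eq_edist]
  norm_cast

theorem Reachable.reachable_deleteEdges_or {a b x : V} (h : G.Reachable x a) :
    (G.deleteEdges {s(a, b)}).Reachable x a ∨ (G.deleteEdges {s(a, b)}).Reachable x b := by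
  classical
  obtain ⟨w⟩ := h
  simp only [reachable_deleteEdges_iff_exists_walk]
  by_cases hab : s(a, b) ∈ w.bypass.edges
  -- a path to `a` through `ab` reaches `b` before `a`
  · have hb := w.bypass.snd_mem_support_of_mem_edges hab
    have ha := Walk.endpoint_notMem_support_takeUntil w.bypass_isPath hb
      (w.bypass.adj_of_mem_edges hab).ne
    exact Or.inr ⟨_, fun h => ha ((w.bypass.takeUntil b hb).fst_mem_support_of_mem_edges h)⟩
  · exact Or.inl ⟨_, hab⟩

theorem IsAcyclic.not_reachable_deleteEdges_of_mem_edges (hG : G.IsAcyclic) {u v x y : V}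
    {w : G.Walk u v} (hw : w.IsPath) (he : s(x, y) ∈ w.edges) :
    ¬(G.deleteEdges {s(x, y)}).Reachable u v := by
  classical
  rw [reachable_deleteEdges_iff_exists_walk]
  rintro ⟨q, hq⟩
  have hqw : q.bypass = w :=
    congrArg Subtype.val ((hG.subsingleton_path u v).elim ⟨q.bypass, q.bypass_isPath⟩ ⟨w, hw⟩)
  exact hq (q.edges_bypass_subset_edges (hqw ▸ he))

theorem IsTree.deleteEdges_sup_edge (hG : G.IsTree) {a b u v : V}
    (huv : ¬(G.deleteEdges {s(a, b)}).Reachable u v) :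
    (G.deleteEdges {s(a, b)} ⊔ edge u v).IsTree := by
  set H := G.deleteEdges {s(a, b)}
  have hne : u ≠ v := by rintro rfl; exact huv .rfl
  -- every vertex stays joined to `a` or `b`, and `u`, `v` are joined to different ones
  have hsplit : ∀ x, H.Reachable x u ∨ H.Reachable x v := by
    intro x
    have h y := (hG.connected y a).reachable_deleteEdges_or (b := b)
    rcases h x with hx | hx <;> rcases h u with hu | hu <;> rcases h v with hv | hv
    all_goals grind [Reachable.trans, Reachable.symm]
  have huv' : (H ⊔ edge u v).Adj u v := Or.inr (by simp [edge_adj, hne])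
  refine ⟨(connected_iff_exists_forall_reachable _).2 ⟨u, fun x => ?_⟩,
    (hG.isAcyclic.anti (deleteEdges_le _)).sup_edge_of_not_reachable huv⟩
  rcases hsplit x with hx | hx
  · exact (hx.mono le_sup_left).symm
  · exact huv'.reachable.trans (hx.mono le_sup_left).symm

theorem symmDiff_edgeSet_deleteEdges_sup_edge {e : Sym2 V} {u v : V} (he : e ∈ G.edgeSet)
    (huv : ¬G.Adj u v) (hne : u ≠ v) :
    symmDiff G.edgeSet (G.deleteEdges {e} ⊔ edge u v).edgeSet = {e, s(u, v)} := by
  rw [edgeSet_sup, edgeSet_deleteEdges, edgeSet_edge_of_ne hne]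
  ext z
  simp only [Set.mem_symmDiff, Set.mem_union, Set.mem_sdiff, Set.mem_singleton_iff,
    Set.mem_insert_iff]
  aesop

theorem neighborSet_deleteEdges_sup_edge {x y u v : V} (hx : u ≠ x) (hy : u ≠ y) (hne : u ≠ v) :
    (G.deleteEdges {s(x, y)} ⊔ edge u v).neighborSet u = insert v (G.neighborSet u) := by
  ext w
  simp only [mem_neighborSet, sup_adj, deleteEdges_adj, edge_adj, Set.mem_singleton_iff,
    Set.mem_insert_iff, Sym2.eq_iff]
  aesop

theorem mem_and_adj_of_neighborSet_eq_singleton {G' : SimpleGraph V} {f : Sym2 V}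
    (hf : G'.edgeSet \ G.edgeSet ⊆ {f}) {v a : V} (hv : G.neighborSet v = {a})
    (h2 : (G'.neighborSet v).ncard = 2) : v ∈ f ∧ G'.Adj v a := by
  have key : ∀ x, G'.Adj v x → x = a ∨ s(v, x) = f := by
    intro x hx
    by_cases hGx : G.Adj v x
    · rw [← mem_neighborSet, hv] at hGx
      exact Or.inl hGx
    · exact Or.inr (hf ⟨hx, hGx⟩)
  obtain ⟨x, y, hxy, hG'v⟩ := Set.ncard_eq_two.mp h2
  have hx : G'.Adj v x := by rw [← mem_neighborSet, hG'v]; exact Set.mem_insert x {y}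
  have hy : G'.Adj v y := by rw [← mem_neighborSet, hG'v]; exact Set.mem_insert_of_mem x rfl
  rcases key x hx with rfl | hx' <;> rcases key y hy with rfl | hy'
  · exact absurd rfl hxy
  · exact ⟨hy' ▸ Sym2.mem_mk_left v y, hx⟩
  · exact ⟨hx' ▸ Sym2.mem_mk_left v x, hy⟩
  · exact absurd (Sym2.congr_right.mp (hx'.trans hy'.symm)) hxy

theorem IsTree.ncard_edgeSet_add_one [Finite V] (hG : G.IsTree) :
    G.edgeSet.ncard + 1 = Nat.card V := by
  rw [← Nat.card_coe_set_eq]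
  exact (isTree_iff_connected_and_card.mp hG).2

theorem IsTree.exists_edgeSet_sdiff_eq_singleton [Finite V] {T : SimpleGraph V} (hG : G.IsTree)
    (hT : T.IsTree) (h : (symmDiff G.edgeSet T.edgeSet).ncard = 2) :
    ∃ f, T.edgeSet \ G.edgeSet = {f} := by
  have hcard : G.edgeSet.ncard = T.edgeSet.ncard := by
    have := hG.ncard_edgeSet_add_one
    have := hT.ncard_edgeSet_add_one
    omega
  rw [Set.ncard_symmDiff_eq_two_mul_ncard_sdiff (Set.toFinite _) (Set.toFinite _) hcard] at h
  exact Set.ncard_eq_one.mp (by omega)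

theorem IsTree.exists_exchange_of_two_lt_dist (hG : G.IsTree) {p p' a c : V}
    (hp : G.neighborSet p = {a}) (hp' : G.neighborSet p' = {c}) (h : 2 < G.dist p p') :
    ∃ T : SimpleGraph V, T.IsTree ∧ (symmDiff G.edgeSet T.edgeSet).ncard = 2 ∧
      (T.neighborSet p).ncard = 2 ∧ (T.neighborSet p').ncard = 2 := by
  obtain ⟨hne, hnadj, hcommon⟩ := hG.connected.two_lt_dist_iff.mp h
  obtain ⟨W, hW⟩ := hG.connected.exists_isPath p p'
  cases W with
  | nil => exact absurd rfl hne
  | @cons _ x _ hpx W =>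
  cases W with
  | nil => exact absurd hpx hnadj
  | @cons _ b _ hxb W =>
  have hxa : x = a := by rw [← Set.mem_singleton_iff, ← hp]; exact hpx
  have hp'c : G.Adj p' c := by rw [← mem_neighborSet, hp']; rfl
  have hpb : p ≠ b := fun h => ((Walk.cons_isPath_iff _ _).mp hW).2 (by simp [h])
  have hbp' : b ≠ p' := fun h =>
    (Set.eq_empty_iff_forall_notMem.mp hcommon) x ⟨hpx, h ▸ hxb.symm⟩
  have hxp' : x ≠ p' := fun h => hnadj (h ▸ hpx)
  have hsep := hG.isAcyclic.not_reachable_deleteEdges_of_mem_edges hW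
    (by simp : s(x, b) ∈ (Walk.cons hpx (Walk.cons hxb W)).edges)
  refine ⟨_, hG.deleteEdges_sup_edge hsep, ?_, ?_, ?_⟩
  · rw [symmDiff_edgeSet_deleteEdges_sup_edge hxb hnadj hne,
      Set.ncard_pair fun h => hnadj (by rw [← mem_edgeSet, ← h]; exact hxb)]
  · rw [neighborSet_deleteEdges_sup_edge hpx.ne hpb hne, hp, Set.ncard_pair (hxa ▸ hxp').symm]
  · rw [edge_comm, neighborSet_deleteEdges_sup_edge hxp'.symm hbp'.symm hne.symm, hp',
      Set.ncard_pair fun h => hnadj (h ▸ hp'c).symm]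

theorem IsTree.two_lt_dist_of_exchange [Finite V] {T : SimpleGraph V} (hG : G.IsTree)
    (hT : T.IsTree) (hsd : (symmDiff G.edgeSet T.edgeSet).ncard = 2) {p p' a c : V}
    (hne : p ≠ p') (hp : G.neighborSet p = {a}) (hp' : G.neighborSet p' = {c})
    (h2p : (T.neighborSet p).ncard = 2) (h2p' : (T.neighborSet p').ncard = 2) :
    2 < G.dist p p' := by
  classical
  obtain ⟨f, hf⟩ := hG.exists_edgeSet_sdiff_eq_singleton hT hsd
  obtain ⟨hpf, hpa⟩ := mem_and_adj_of_neighborSet_eq_singleton hf.subset hp h2p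
  obtain ⟨hp'f, hp'c⟩ := mem_and_adj_of_neighborSet_eq_singleton hf.subset hp' h2p'
  have hpp' : s(p, p') ∈ T.edgeSet \ G.edgeSet := by
    rw [hf, ← (Sym2.mem_and_mem_iff hne).mp ⟨hpf, hp'f⟩]; rfl
  refine hG.connected.two_lt_dist_iff.mpr
    ⟨hne, hpp'.2, Set.eq_empty_of_forall_notMem fun x hx => ?_⟩
  obtain ⟨hpx, hp'x⟩ := hx
  rw [hp] at hpx
  rw [hp'] at hp'x
  subst hpx hp'x
  exact hT.isAcyclic.cliqueFree le_rfl {p, x, p'}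
    (is3Clique_triple_iff.mpr ⟨hpa, hpp'.1, hp'c.symm⟩)

end SimpleGraph

theorem stmt_12_general (n : ℕ) (T : SimpleGraph (Fin n)) (hT : T.IsTree)
    (p p' : Fin n) (hne : p ≠ p')
    (hp : (T.neighborSet p).ncard = 1) (hp' : (T.neighborSet p').ncard = 1) :
    2 < T.dist p p' ↔ ∃ T' : SimpleGraph (Fin n), T'.IsTree ∧
      (symmDiff T.edgeSet T'.edgeSet).ncard = 2 ∧
      (T'.neighborSet p).ncard = 2 ∧ (T'.neighborSet p').ncard = 2 := by
  obtain ⟨a, ha⟩ := Set.ncard_eq_one.mp hp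
  obtain ⟨c, hc⟩ := Set.ncard_eq_one.mp hp'
  exact ⟨hT.exists_exchange_of_two_lt_dist ha hc,
    fun ⟨T', hT', hsd, h2p, h2p'⟩ => hT.two_lt_dist_of_exchange hT' hsd hne ha hc h2p h2p'⟩

theorem stmt_12 (n : ℕ) (hn : 4 ≤ n) (T : SimpleGraph (Fin n)) (hT : T.IsTree)
    (p p' : Fin n) (hne : p ≠ p')
    (hp : (T.neighborSet p).ncard = 1) (hp' : (T.neighborSet p').ncard = 1) :
    2 < T.dist p p' ↔ ∃ T' : SimpleGraph (Fin n), T'.IsTree ∧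
      (symmDiff T.edgeSet T'.edgeSet).ncard = 2 ∧
      (T'.neighborSet p).ncard = 2 ∧ (T'.neighborSet p').ncard = 2 :=
  stmt_12_general n T hT p p' hne hp hp'
end

section
/- Let P be a finite set of points in general position in the plane with |P| = n, let p, q ∈ P be distinct, and let T be a pq-brush in which exactly k+1 edges emanate from p and exactly ℓ+1 edges emanate from q (so k + ℓ = n - 2). If ℓ ≥ 1, then there exists a non-crossing spanning tree T' with |E(T) △ E(T')| = 2 that is either a pq-brush with k+2 edges at p and ℓ edges at q, or (if ℓ = 1) the star S(p). -/
def Cross (a b c d : ℝ × ℝ) : Prop :=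
  (openSegment ℝ a b ∩ openSegment ℝ c d).Nonempty

def GenPos (P : Finset (ℝ × ℝ)) : Prop :=
  ∀ a ∈ P, ∀ b ∈ P, ∀ c ∈ P, a ≠ b → a ≠ c → b ≠ c →
    ¬ Collinear ℝ ({a, b, c} : Set (ℝ × ℝ))

def NonCrossing {P : Finset (ℝ × ℝ)} (T : SimpleGraph P) : Prop :=
  ∀ a b c d : P, T.Adj a b → T.Adj c d → s(a, b) ≠ s(c, d) →
    ¬ Cross (a : ℝ × ℝ) b c d

/-- A `pq`-brush: a spanning tree containing the edge `{p,q}`, in which every edge is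
incident to `p` or `q`, and both `p` and `q` have degree at least 2. -/
def IsBrush {P : Finset (ℝ × ℝ)} (T : SimpleGraph P) (p q : P) : Prop :=
  T.Adj p q ∧ 2 ≤ (T.neighborSet p).ncard ∧ 2 ≤ (T.neighborSet q).ncard ∧
    ∀ a b : P, T.Adj a b → a = p ∨ a = q ∨ b = p ∨ b = q

/-- The spanning star of `P` with center `p`. -/
def starGraph (P : Finset (ℝ × ℝ)) (p : P) : SimpleGraph P :=
  SimpleGraph.fromRel (fun a _ => a = p)

/-! Moving a leaf `x` of `q` over to `p` turns the `pq`-brush `T` into a spanning tree `T'` with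
`|E(T) △ E(T')| = 2`. Instead of minimising the angle `∠pqx`, choose `x` so that no other neighbour
`d` of `q` lies strictly inside that angle, i.e. `d - q` is not in the open cone spanned by `p - q`
and `x - q`; in general position, lying strictly inside the angle is a strict partial order on the
neighbours of `q`, so a minimal `x` exists. The new segment `px` cannot cross an edge at `p` or the
edge `pq` (they share an endpoint and no three points are collinear), and if it crossed an edge `qd`
at a point `z`, then `d - q` would be a positive multiple of `z - q`, which lies inside `∠pqx`. -/

section Cone

variable {E : Type*} [AddCommGroup E] [Module ℝ E]

def openCone (u v : E) : Set E := {w | ∃ a b : ℝ, 0 < a ∧ 0 < b ∧ a • u + b • v = w}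

lemma collinear_of_sub_eq_smul {a b c : E} {r : ℝ} (h : c - a = r • (b - a)) :
    Collinear ℝ {a, b, c} := by
  refine (collinear_iff_of_mem (Set.mem_insert a _)).2 ⟨b - a, ?_⟩
  simp only [Set.mem_insert_iff, Set.mem_singleton_iff, vadd_eq_add, forall_eq_or_imp, forall_eq]
  exact ⟨⟨0, by simp⟩, ⟨1, by simp⟩, ⟨r, by rw [← h, sub_add_cancel]⟩⟩

lemma openCone_trans {u v v' w : E} (hw : w ∈ openCone u v) (hv : v ∈ openCone u v') :
    w ∈ openCone u v' := by
  obtain ⟨a, b, ha, hb, rfl⟩ := hw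
  obtain ⟨c, d, hc, hd, rfl⟩ := hv
  exact ⟨a + b * c, b * d, by positivity, by positivity, by module⟩

lemma collinear_of_sub_mem_openCone {q p x : E} (h : x - q ∈ openCone (p - q) (x - q)) :
    Collinear ℝ {q, p, x} := by
  obtain ⟨a, b, ha, -, hab⟩ := h
  have hab' : a • (p - q) = (1 - b) • (x - q) := by
    linear_combination (norm := module) hab
  rw [Set.pair_comm]
  refine collinear_of_sub_eq_smul (r := a⁻¹ * (1 - b)) ?_
  rw [mul_smul, ← hab', smul_smul, inv_mul_cancel₀ ha.ne', one_smul]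

lemma sub_mem_openCone_of_mem_openSegment {p x q d z : E} (hpx : z ∈ openSegment ℝ p x)
    (hqd : z ∈ openSegment ℝ q d) : d - q ∈ openCone (p - q) (x - q) := by
  obtain ⟨a, b, ha, hb, hab, rfl⟩ := hpx
  obtain ⟨c, e, -, he, hce, hz⟩ := hqd
  refine ⟨a / e, b / e, by positivity, by positivity, ?_⟩
  have key : e • (d - q) = a • (p - q) + b • (x - q) := by
    linear_combination (norm := module) hz - (hce - hab) • q
  rw [div_eq_inv_mul, div_eq_inv_mul, mul_smul, mul_smul, ← smul_add, ← key, smul_smul,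
    inv_mul_cancel₀ he.ne', one_smul]

lemma collinear_of_mem_openSegment_of_mem_openSegment {a b c z : E}
    (hb : z ∈ openSegment ℝ a b) (hc : z ∈ openSegment ℝ a c) : Collinear ℝ {a, b, c} := by
  obtain ⟨_, r, -, -, h⟩ := sub_mem_openCone_of_mem_openSegment hb hc
  exact collinear_of_sub_eq_smul (r := r) (by simpa using h.symm)

lemma exists_forall_sub_notMem_openCone {ι : Type*} (f : ι → E) (q p : E) {s : Set ι}
    (hs : s.Finite) (hne : s.Nonempty) (hcol : ∀ i ∈ s, ¬Collinear ℝ {q, p, f i}) :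
    ∃ i ∈ s, ∀ j ∈ s, f j - q ∉ openCone (p - q) (f i - q) := by
  let r : s → s → Prop := fun j i => f j - q ∈ openCone (p - q) (f i - q)
  have : Finite s := hs.to_subtype
  have : IsTrans s r := ⟨fun _ _ _ => openCone_trans⟩
  have : Std.Irrefl r := ⟨fun i hi => hcol i i.2 (collinear_of_sub_mem_openCone hi)⟩
  obtain ⟨⟨i, hi⟩, -, hmin⟩ :=
    (Finite.wellFounded_of_trans_of_irrefl r).has_min Set.univ ⟨⟨_, hne.some_mem⟩, trivial⟩
  exact ⟨i, hi, fun j hj => hmin ⟨j, hj⟩ trivial⟩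

end Cone

namespace SimpleGraph

variable {V : Type*} {G : SimpleGraph V}

def replaceEdge (G : SimpleGraph V) (e e' : Sym2 V) : SimpleGraph V :=
  fromEdgeSet (insert e' (G.edgeSet \ {e}))

variable {e e' : Sym2 V} {a b p q x : V}

lemma replaceEdge_adj (he' : ¬e'.IsDiag) :
    (G.replaceEdge e e').Adj a b ↔ s(a, b) = e' ∨ G.Adj a b ∧ s(a, b) ≠ e := by
  rw [replaceEdge, fromEdgeSet_adj, Set.mem_insert_iff, Set.mem_sdiff, mem_edgeSet,
    Set.mem_singleton_iff]
  constructor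
  · exact fun h => h.1
  · rintro (rfl | h)
    · exact ⟨Or.inl rfl, fun hab => he' (Sym2.mk_isDiag_iff.2 hab)⟩
    · exact ⟨Or.inr h, h.1.ne⟩

lemma edgeSet_replaceEdge (he' : ¬e'.IsDiag) :
    (G.replaceEdge e e').edgeSet = insert e' (G.edgeSet \ {e}) := by
  rw [replaceEdge, edgeSet_fromEdgeSet, sdiff_eq_left, Set.disjoint_left]
  rintro _ (rfl | ⟨he, -⟩)
  exacts [he', G.not_isDiag_of_mem_edgeSet he]

lemma ncard_symmDiff_edgeSet_replaceEdge (he : e ∈ G.edgeSet) (he' : e' ∉ G.edgeSet)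
    (hd : ¬e'.IsDiag) : (symmDiff G.edgeSet (G.replaceEdge e e').edgeSet).ncard = 2 := by
  have hne : e ≠ e' := fun h => he' (h ▸ he)
  have : symmDiff G.edgeSet (G.replaceEdge e e').edgeSet = {e, e'} := by
    ext f
    rw [edgeSet_replaceEdge hd, Set.mem_symmDiff]
    by_cases hfe : f = e <;> by_cases hfe' : f = e' <;> simp_all
  rw [this, Set.ncard_pair hne]

lemma adj_replaceEdge_of_adj (hpq : G.Adj p q) (hpx : p ≠ x) :
    (G.replaceEdge s(q, x) s(p, x)).Adj p q :=
  (replaceEdge_adj (by simpa using hpx)).2 (Or.inr ⟨hpq, by simp [hpq.ne, hpx]⟩)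

lemma Connected.of_forall_adj_reachable {H : SimpleGraph V} (hG : G.Connected)
    (h : ∀ a b, G.Adj a b → H.Reachable a b) : H.Connected := by
  obtain ⟨v⟩ := hG.nonempty
  refine (connected_iff_exists_forall_reachable H).2 ⟨v, fun w => ?_⟩
  simp only [reachable_iff_reflTransGen] at h ⊢
  exact Relation.reflTransGen_closed h _ _
    ((reachable_iff_reflTransGen v w).1 (hG.preconnected v w))

lemma connected_replaceEdge (hG : G.Connected) (hpq : G.Adj p q) (hpx : p ≠ x) :
    (G.replaceEdge s(q, x) s(p, x)).Connected := by
  have hd : ¬s(p, x).IsDiag := by simpa using hpx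
  have hpq' := adj_replaceEdge_of_adj hpq hpx
  have hpx' : (G.replaceEdge s(q, x) s(p, x)).Adj p x := (replaceEdge_adj hd).2 (Or.inl rfl)
  refine hG.of_forall_adj_reachable fun a b hab => ?_
  by_cases he : s(a, b) = s(q, x)
  · have hqx : (G.replaceEdge s(q, x) s(p, x)).Reachable q x :=
      hpq'.symm.reachable.trans hpx'.reachable
    rcases Sym2.eq_iff.1 he with ⟨rfl, rfl⟩ | ⟨rfl, rfl⟩
    exacts [hqx, hqx.symm]
  · exact ((replaceEdge_adj hd).2 (Or.inr ⟨hab, he⟩)).reachable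

lemma IsAcyclic.not_adj_of_adj_of_adj (hG : G.IsAcyclic) (hpq : G.Adj p q) (hqx : G.Adj q x) :
    ¬G.Adj p x := by
  classical
  exact fun hpx => hG.cliqueFree le_rfl {p, q, x} (is3Clique_triple_iff.2 ⟨hpq, hpx, hqx⟩)

lemma isTree_replaceEdge [Finite V] (hG : G.IsTree) (hpq : G.Adj p q) (hqx : G.Adj q x)
    (hpx : p ≠ x) : (G.replaceEdge s(q, x) s(p, x)).IsTree := by
  have hnpx := hG.isAcyclic.not_adj_of_adj_of_adj hpq hqx
  rw [isTree_iff_connected_and_card] at hG ⊢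
  refine ⟨connected_replaceEdge hG.1 hpq hpx, ?_⟩
  rw [Nat.card_coe_set_eq, edgeSet_replaceEdge (by simpa using hpx),
    Set.ncard_exchange (a := s(p, x)) hnpx hqx, ← Nat.card_coe_set_eq, hG.2]

lemma neighborSet_replaceEdge_left (hpq : p ≠ q) (hpx : p ≠ x) :
    (G.replaceEdge s(q, x) s(p, x)).neighborSet p = insert x (G.neighborSet p) := by
  ext y
  simp [replaceEdge_adj (e' := s(p, x)) (by simpa using hpx), hpq, hpx]

lemma neighborSet_replaceEdge_right (hpq : p ≠ q) (hpx : p ≠ x) (hqx : q ≠ x) :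
    (G.replaceEdge s(q, x) s(p, x)).neighborSet q = G.neighborSet q \ {x} := by
  ext y
  simp [replaceEdge_adj (e' := s(p, x)) (by simpa using hpx), hpq.symm, hqx]

lemma IsVertexCover.replaceEdge {c : Set V} (hc : G.IsVertexCover c) (hp : p ∈ c) (hpx : p ≠ x) :
    (G.replaceEdge e s(p, x)).IsVertexCover c := by
  intro a b hab
  rcases (replaceEdge_adj (by simpa using hpx)).1 hab with h | ⟨h, -⟩
  · rcases Sym2.eq_iff.1 h with ⟨rfl, -⟩ | ⟨-, rfl⟩
    exacts [Or.inl hp, Or.inr hp]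
  · exact hc h

lemma adj_or_adj_of_isVertexCover (hG : G.Connected) (hc : G.IsVertexCover {p, q})
    (hp : a ≠ p) (hq : a ≠ q) : G.Adj a p ∨ G.Adj a q := by
  obtain ⟨b, hb⟩ := (hG.preconnected a p).nonempty_neighborSet_left hp
  rcases hc hb with h | h
  · simp [hp, hq] at h
  · rcases h with rfl | rfl
    exacts [Or.inl hb, Or.inr hb]

end SimpleGraph

section Cross

variable {a b c d : ℝ × ℝ}

lemma Cross.symm (h : Cross a b c d) : Cross c d a b := by
  rwa [Cross, Set.inter_comm]

lemma cross_swap_left : Cross b a c d ↔ Cross a b c d := by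
  rw [Cross, Cross, openSegment_symm]

lemma cross_swap_right : Cross a b d c ↔ Cross a b c d := by
  rw [Cross, Cross, openSegment_symm ℝ d]

end Cross

section Plane

variable {P : Finset (ℝ × ℝ)}

lemma GenPos.not_collinear (hP : GenPos P) {a b c : P} (hab : a ≠ b) (hac : a ≠ c)
    (hbc : b ≠ c) : ¬Collinear ℝ ({(a : ℝ × ℝ), (b : ℝ × ℝ), (c : ℝ × ℝ)} : Set (ℝ × ℝ)) :=
  hP a a.2 b b.2 c c.2 (Subtype.coe_injective.ne hab) (Subtype.coe_injective.ne hac)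
    (Subtype.coe_injective.ne hbc)

lemma GenPos.not_cross_of_left_eq (hP : GenPos P) {a b c : P} (hab : a ≠ b) (hac : a ≠ c)
    (hbc : b ≠ c) : ¬Cross a b a c := fun ⟨_, hb, hc⟩ =>
  hP.not_collinear hab hac hbc (collinear_of_mem_openSegment_of_mem_openSegment hb hc)

lemma NonCrossing.of_adj_or_eq {G H : SimpleGraph P} {u v : P} (hG : NonCrossing G)
    (hH : ∀ a b, H.Adj a b → G.Adj a b ∨ s(a, b) = s(u, v))
    (huv : ∀ c d, H.Adj c d → s(c, d) ≠ s(u, v) → ¬Cross u v c d) : NonCrossing H := by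
  have huv' : ∀ a b c d, H.Adj c d → s(a, b) = s(u, v) → s(a, b) ≠ s(c, d) →
      ¬Cross a b c d := by
    intro a b c d hcd hab hne
    rcases Sym2.eq_iff.1 hab with ⟨rfl, rfl⟩ | ⟨rfl, rfl⟩
    · exact huv c d hcd (hab ▸ hne.symm)
    · rw [cross_swap_left]; exact huv c d hcd (hab ▸ hne.symm)
  intro a b c d hab hcd hne hcross
  rcases hH a b hab with hab' | hab'
  · rcases hH c d hcd with hcd' | hcd'
    · exact hG a b c d hab' hcd' hne hcross
    · exact huv' c d a b hab hcd' (Ne.symm hne) hcross.symm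
  · exact huv' a b c d hcd hab' hne hcross

lemma nonCrossing_replaceEdge (hP : GenPos P) {T : SimpleGraph P} (hT : NonCrossing T)
    {p q x : P} (hc : T.IsVertexCover {p, q}) (hpq : T.Adj p q) (hqx : T.Adj q x) (hpx : p ≠ x)
    (hx : ∀ d ∈ T.neighborSet q \ {p}, (d : ℝ × ℝ) - q ∉ openCone ((p : ℝ × ℝ) - q) (x - q)) :
    NonCrossing (T.replaceEdge s(q, x) s(p, x)) := by
  have hd : ¬s(p, x).IsDiag := by simpa using hpx
  refine hT.of_adj_or_eq (u := p) (v := x) (fun a b hab => ?_) fun c d hcd hne => ?_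
  · rcases (SimpleGraph.replaceEdge_adj hd).1 hab with h | ⟨h, -⟩
    exacts [Or.inr h, Or.inl h]
  replace hcd : T.Adj c d := (((SimpleGraph.replaceEdge_adj hd).1 hcd).resolve_left hne).1
  wlog hcpq : c = p ∨ c = q generalizing c d
  · rw [cross_swap_right]
    refine this d c (by rwa [Sym2.eq_swap]) hcd.symm ?_
    simpa [hcpq] using hc hcd
  rcases hcpq with h | h
  · subst c
    exact hP.not_cross_of_left_eq hpx hcd.ne fun h => hne (by rw [h])
  · subst c
    by_cases hdp : d = p
    · subst d
      rw [cross_swap_right]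
      exact hP.not_cross_of_left_eq hpx hpq.ne hqx.ne'
    · rintro ⟨z, hz, hz'⟩
      exact hx d ⟨hcd, hdp⟩ (sub_mem_openCone_of_mem_openSegment hz hz')

lemma eq_starGraph_of_isVertexCover {G : SimpleGraph P} {p q : P} (hG : G.Connected)
    (hc : G.IsVertexCover {p, q}) (hq : G.neighborSet q = {p}) : G = starGraph P p := by
  have hqp : ∀ {b}, G.Adj q b → b = p := fun h => (Set.ext_iff.1 hq _).1 h
  have hcenter : ∀ b, b ≠ p → G.Adj p b := by
    intro b hbp
    by_cases hbq : b = q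
    · exact hbq ▸ ((Set.ext_iff.1 hq p).2 rfl).symm
    · rcases SimpleGraph.adj_or_adj_of_isVertexCover hG hc hbp hbq with h | h
      exacts [h.symm, absurd (hqp h.symm) hbp]
  ext a b
  simp only [starGraph, SimpleGraph.fromRel_adj]
  constructor
  · intro hab
    refine ⟨hab.ne, ?_⟩
    rcases hc hab with (rfl | rfl) | (rfl | rfl)
    exacts [Or.inl rfl, Or.inr (hqp hab), Or.inr rfl, Or.inl (hqp hab.symm)]
  · rintro ⟨hab, rfl | rfl⟩
    exacts [hcenter b hab.symm, (hcenter a hab).symm]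

end Plane

theorem stmt_15_general (P : Finset (ℝ × ℝ)) (hgen : GenPos P) (k ℓ : ℕ)
    (hl : 1 ≤ ℓ)
    (p q : P)
    (T : SimpleGraph P) (hT : T.IsTree) (hnc : NonCrossing T)
    (hbrush : IsBrush T p q)
    (hdp : (T.neighborSet p).ncard = k + 1) (hdq : (T.neighborSet q).ncard = ℓ + 1) :
    ∃ T' : SimpleGraph P, T'.IsTree ∧ NonCrossing T' ∧
      (symmDiff T.edgeSet T'.edgeSet).ncard = 2 ∧
      ((IsBrush T' p q ∧ (T'.neighborSet p).ncard = k + 2 ∧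
          (T'.neighborSet q).ncard = ℓ) ∨
        (ℓ = 1 ∧ T' = starGraph P p)) := by
  obtain ⟨hpq, -, -, hinc⟩ := hbrush
  have hc : T.IsVertexCover {p, q} := fun a b h => by simpa [or_assoc] using hinc a b h
  have hne : (T.neighborSet q \ {p}).Nonempty := Set.nonempty_of_ncard_ne_zero <| by
    rw [Set.ncard_sdiff_singleton_of_mem (show p ∈ T.neighborSet q from hpq.symm), hdq]; omega
  obtain ⟨x, ⟨hqx, hxp⟩, hx⟩ := exists_forall_sub_notMem_openCone ((↑) : P → ℝ × ℝ) q p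
    (Set.toFinite _) hne fun y ⟨hqy, hyp⟩ => hgen.not_collinear hpq.ne' hqy.ne (Ne.symm hyp)
  have hpx : p ≠ x := Ne.symm hxp
  set T' := T.replaceEdge s(q, x) s(p, x)
  have hT' : T'.IsTree := SimpleGraph.isTree_replaceEdge hT hpq hqx hpx
  have hpq' : T'.Adj p q := SimpleGraph.adj_replaceEdge_of_adj hpq hpx
  have hdp' : (T'.neighborSet p).ncard = k + 2 := by
    rw [SimpleGraph.neighborSet_replaceEdge_left hpq.ne hpx, Set.ncard_insert_of_notMem
      (show x ∉ T.neighborSet p from hT.isAcyclic.not_adj_of_adj_of_adj hpq hqx), hdp]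
  have hdq' : (T'.neighborSet q).ncard = ℓ := by
    rw [SimpleGraph.neighborSet_replaceEdge_right hpq.ne hpx hqx.ne,
      Set.ncard_sdiff_singleton_of_mem hqx, hdq, Nat.add_sub_cancel]
  have hc' : T'.IsVertexCover {p, q} := hc.replaceEdge (by simp) hpx
  refine ⟨T', hT', nonCrossing_replaceEdge hgen hnc hc hpq hqx hpx hx,
    SimpleGraph.ncard_symmDiff_edgeSet_replaceEdge hqx
      (hT.isAcyclic.not_adj_of_adj_of_adj hpq hqx) (by simpa using hpx), ?_⟩
  rcases hl.eq_or_lt with rfl | hl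
  · have hq : T'.neighborSet q = {p} :=
      (Set.eq_of_subset_of_ncard_le (t := T'.neighborSet q) (Set.singleton_subset_iff.2 hpq'.symm)
        (by rw [hdq', Set.ncard_singleton]) (Set.toFinite _)).symm
    exact Or.inr ⟨rfl, eq_starGraph_of_isVertexCover hT'.connected hc' hq⟩
  · exact Or.inl ⟨⟨hpq', by omega, by omega, fun a b h => by simpa [or_assoc] using hc' h⟩,
      hdp', hdq'⟩

theorem stmt_15 (P : Finset (ℝ × ℝ)) (hgen : GenPos P) (k ℓ : ℕ)
    (hkl : k + ℓ = P.card - 2) (hl : 1 ≤ ℓ)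
    (p q : P) (hpq : p ≠ q)
    (T : SimpleGraph P) (hT : T.IsTree) (hnc : NonCrossing T)
    (hbrush : IsBrush T p q)
    (hdp : (T.neighborSet p).ncard = k + 1) (hdq : (T.neighborSet q).ncard = ℓ + 1) :
    ∃ T' : SimpleGraph P, T'.IsTree ∧ NonCrossing T' ∧
      (symmDiff T.edgeSet T'.edgeSet).ncard = 2 ∧
      ((IsBrush T' p q ∧ (T'.neighborSet p).ncard = k + 2 ∧
          (T'.neighborSet q).ncard = ℓ) ∨
        (ℓ = 1 ∧ T' = starGraph P p)) :=
  stmt_15_general P hgen k ℓ hl p q T hT hnc hbrush hdp hdq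
end
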